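/- Let D={α+β, 3α+β} and let ξ:D→ℂ∖{0} be a map. A linear form λ∈𝔫* belongs to the basic subvariety 𝒪_{D,ξ} if and only if λ_{3α+β}=ξ(3α+β), λ_{3α+2β}=0, and 2c₃λ_{α+β}λ_{3α+β} − c₂λ_{2α+β}² = 2c₃ξ(α+β)ξ(3α+β) (with λ_α and λ_β arbitrary). -/

import Mathlib

/-!
Write `x = ∑ tᵢ eᵢ`. On the dual basis, `-ad x` acts by the nilpotent chain
`e₄* ↦ t₃c₃ e₀* - t₀c₃ e₃*`, `e₃* ↦ t₂c₂ e₀* - t₀c₂ e₂*`, `e₂* ↦ t₁c₁ e₀* - t₀c₁ e₁*`,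
`e₁*, e₀* ↦ 0`, so `e₂* ∘ exp(-ad x)` and `e₄* ∘ exp(-ad x)` are explicit. A form in
`Ω_{α+β}` is `ξ₂ e₂*` plus a combination of `e₀*, e₁*`, while a form in `Ω_{3α+β}` has
`(λ₂, λ₃, λ₄, λ₅) = (ξ₄ t₀² c₂c₃ / 2, -ξ₄ t₀ c₃, ξ₄, 0)`, on which `2c₃λ₂λ₄ - c₂λ₃²` vanishes;
adding the two gives the three conditions. Conversely, `t₀` is read off from `λ₃`, the relation
then forces `λ₂`, and the free coordinates `λ₀, λ₁` are matched by the `e₀*, e₁*` part of the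
`Ω_{α+β}` summand, which is possible because `ξ₂ c₁ ≠ 0`.

The vanishing brackets come from the root geometry: the Gram determinant of `α, β` is `3/4`, so
they are linearly independent and a sum of two positive roots is a root exactly when the
coefficient pairs add up to that of a root.
-/

open scoped RealInnerProductSpace

/-- The exponential of a (nilpotent) endomorphism, as a finite sum. -/
noncomputable def expNil {M : Type*} [AddCommGroup M] [Module ℂ M] (A : Module.End ℂ M) :
    Module.End ℂ M :=
  ∑ k ∈ Finset.range (nilpotencyClass A), (k.factorial : ℂ)⁻¹ • A ^ k

/-- The coadjoint orbit `Ω_{D,ξ}` of the linear form `f_{D,ξ} = ∑_{γ∈D} ξ(γ) e_γ*`,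
consisting of all `f_{D,ξ} ∘ exp(−ad x)`, `x ∈ 𝔫`.  Roots are encoded by indices. -/
noncomputable def coadjointOrbit {ι : Type*} {n : Type*} [LieRing n] [LieAlgebra ℂ n]
    (e : Module.Basis ι ℂ n) (D : Finset ι) (ξ : ι → ℂ) :
    Set (Module.Dual ℂ n) :=
  {lam | ∃ x : n, lam = (∑ i ∈ D, ξ i • e.coord i).comp (expNil (-(LieAlgebra.ad ℂ n x)))}

/-- The basic subvariety `𝒪_{D,ξ} = Σ_{γ∈D} Ω_{{γ},ξ|{γ}}`. -/
noncomputable def basicSubvariety {ι : Type*} [DecidableEq ι] {n : Type*} [LieRing n] [LieAlgebra ℂ n]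
    (e : Module.Basis ι ℂ n) (D : Finset ι) (ξ : ι → ℂ) :
    Set (Module.Dual ℂ n) :=
  {lam | ∃ μ : ι → Module.Dual ℂ n,
    (∀ i ∈ D, μ i ∈ coadjointOrbit e {i} ξ) ∧ lam = ∑ i ∈ D, μ i}

lemma comp_expNil_eq_sum {M N : Type*} [AddCommGroup M] [Module ℂ M] [AddCommGroup N] [Module ℂ N]
    {A : Module.End ℂ M} (hA : IsNilpotent A) {φ : M →ₗ[ℂ] N} {k : ℕ} (hk : φ ∘ₗ A ^ k = 0) :
    φ ∘ₗ expNil A = ∑ i ∈ Finset.range k, (i.factorial : ℂ)⁻¹ • φ ∘ₗ A ^ i := by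
  set f : ℕ → M →ₗ[ℂ] N := fun i => (i.factorial : ℂ)⁻¹ • φ ∘ₗ A ^ i
  have hf : ∀ i, min (nilpotencyClass A) k ≤ i → f i = 0 := by
    intro i hi
    rcases min_le_iff.mp hi with hi | hi
    · simp [f, pow_eq_zero_of_le hi (pow_nilpotencyClass hA)]
    · simp [f, ← pow_mul_pow_sub A hi, Module.End.mul_eq_comp, ← LinearMap.comp_assoc, hk]
  have hsub : ∀ m, min (nilpotencyClass A) k ≤ m →
      ∑ i ∈ Finset.range m, f i = ∑ i ∈ Finset.range (min (nilpotencyClass A) k), f i :=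
    fun m hm => (Finset.sum_subset (Finset.range_subset_range.2 hm) fun i _ hi =>
      hf i (not_lt.mp (Finset.mem_range.not.mp hi))).symm
  calc φ ∘ₗ expNil A = ∑ i ∈ Finset.range (nilpotencyClass A), f i := by
        ext v
        simp [f, expNil]
    _ = ∑ i ∈ Finset.range k, f i := by rw [hsub _ (min_le_left _ _), hsub _ (min_le_right _ _)]

lemma neg_ad_apply {R L : Type*} [CommRing R] [LieRing L] [LieAlgebra R L] (x y : L) :
    (-LieAlgebra.ad R L x) y = ⁅y, x⁆ := by
  rw [LinearMap.neg_apply, LieAlgebra.ad_apply, lie_skew]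

lemma mem_coadjointOrbit_singleton_iff {ι n : Type*} [LieRing n] [LieAlgebra ℂ n]
    {e : Module.Basis ι ℂ n} {i : ι} {ξ : ι → ℂ} {μ : Module.Dual ℂ n} :
    μ ∈ coadjointOrbit e {i} ξ ↔ ∃ x : n, μ = ξ i • (e.coord i ∘ₗ expNil (-LieAlgebra.ad ℂ n x)) := by
  simp only [coadjointOrbit, Finset.sum_singleton, LinearMap.smul_comp, Set.mem_ofPred_eq]

lemma mem_basicSubvariety_pair_iff {ι n : Type*} [DecidableEq ι] [LieRing n] [LieAlgebra ℂ n]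
    {e : Module.Basis ι ℂ n} {i j : ι} (hij : i ≠ j) {ξ : ι → ℂ} {lam : Module.Dual ℂ n} :
    lam ∈ basicSubvariety e {i, j} ξ ↔
      ∃ μ ∈ coadjointOrbit e {i} ξ, ∃ ν ∈ coadjointOrbit e {j} ξ, lam = μ + ν := by
  constructor
  · rintro ⟨μ, hμ, rfl⟩
    exact ⟨μ i, hμ i (by simp), μ j, hμ j (by simp), Finset.sum_pair hij⟩
  · rintro ⟨μ, hμ, ν, hν, rfl⟩
    refine ⟨fun k => if k = i then μ else ν, fun k hk => ?_, ?_⟩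
    · rcases Finset.mem_insert.mp hk with rfl | hk
      · simpa using hμ
      · simpa [Finset.mem_singleton.mp hk, hij.symm] using hν
    · simp [Finset.sum_pair hij, hij.symm]

def g2RootCoeff : Fin 6 → ℕ × ℕ := ![(1, 0), (0, 1), (1, 1), (2, 1), (3, 1), (3, 2)]

lemma linearIndependent_pair_of_g2_gram {E : Type*} [NormedAddCommGroup E] [InnerProductSpace ℝ E]
    {α β : E} (hαα : ⟪α, α⟫ = 1) (hββ : ⟪β, β⟫ = 3) (hαβ : ⟪α, β⟫ = -(3/2)) :
    LinearIndependent ℝ ![α, β] := by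
  refine Matrix.linearIndependent_of_det_gram_ne_zero (𝕜 := ℝ) ?_
  simp only [Matrix.det_fin_two, Matrix.gram_apply, Matrix.cons_val_zero, Matrix.cons_val_one,
    real_inner_comm α β, hαα, hββ, hαβ]
  norm_num

lemma eq_g2RootCoeff_smul_add_smul {E : Type*} [AddCommGroup E] [Module ℝ E] {α β : E}
    {root : Fin 6 → E}
    (hroot : root = ![α, β, α + β, (2:ℝ) • α + β, (3:ℝ) • α + β, (3:ℝ) • α + (2:ℝ) • β])
    (k : Fin 6) :
    root k = ((g2RootCoeff k).1 : ℝ) • α + ((g2RootCoeff k).2 : ℝ) • β := by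
  subst hroot
  fin_cases k <;> simp [g2RootCoeff]

lemma add_mem_range_iff_g2RootCoeff {E : Type*} [AddCommGroup E] [Module ℝ E] {α β : E}
    (hαβ : LinearIndependent ℝ ![α, β]) {root : Fin 6 → E}
    (hroot : root = ![α, β, α + β, (2:ℝ) • α + β, (3:ℝ) • α + β, (3:ℝ) • α + (2:ℝ) • β])
    (i j : Fin 6) :
    root i + root j ∈ Set.range root ↔ g2RootCoeff i + g2RootCoeff j ∈ Set.range g2RootCoeff := by
  have hsum : root i + root j = (((g2RootCoeff i + g2RootCoeff j).1 : ℕ) : ℝ) • α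
      + (((g2RootCoeff i + g2RootCoeff j).2 : ℕ) : ℝ) • β := by
    simp only [eq_g2RootCoeff_smul_add_smul hroot, Prod.fst_add, Prod.snd_add]
    push_cast
    module
  rw [hsum]
  simp only [Set.mem_range, eq_g2RootCoeff_smul_add_smul hroot]
  refine exists_congr fun k => ⟨fun h => ?_, fun h => by rw [h]⟩
  obtain ⟨h₁, h₂⟩ := hαβ.eq_of_pair h
  exact Prod.ext (by exact_mod_cast h₁) (by exact_mod_cast h₂)

-- `e i` is a root vector for the root with coordinates `g2RootCoeff i` in `α, β`; the grading
-- condition is phrased on these coordinates so that instances of it can be checked by `decide`.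
structure IsG2Basis {n : Type*} [LieRing n] [LieAlgebra ℂ n] (e : Module.Basis (Fin 6) ℂ n)
    (c₁ c₂ c₃ c₄ c₅ : ℂ) : Prop where
  lie_zero_one : ⁅e 0, e 1⁆ = c₁ • e 2
  lie_zero_two : ⁅e 0, e 2⁆ = c₂ • e 3
  lie_zero_three : ⁅e 0, e 3⁆ = c₃ • e 4
  lie_four_one : ⁅e 4, e 1⁆ = c₄ • e 5
  lie_two_three : ⁅e 2, e 3⁆ = c₅ • e 5
  lie_eq_zero : ∀ i j, (∀ k, g2RootCoeff i + g2RootCoeff j ≠ g2RootCoeff k) → ⁅e i, e j⁆ = 0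

namespace IsG2Basis

variable {n : Type*} [LieRing n] [LieAlgebra ℂ n] {e : Module.Basis (Fin 6) ℂ n}
  {c₁ c₂ c₃ c₄ c₅ : ℂ}

lemma of_roots {E : Type*} [NormedAddCommGroup E] [InnerProductSpace ℝ E] {α β : E}
    (hαα : ⟪α, α⟫ = 1) (hββ : ⟪β, β⟫ = 3) (hαβ : ⟪α, β⟫ = -(3/2)) {root : Fin 6 → E}
    (hroot : root = ![α, β, α + β, (2:ℝ) • α + β, (3:ℝ) • α + β, (3:ℝ) • α + (2:ℝ) • β])
    (h01 : ⁅e 0, e 1⁆ = c₁ • e 2) (h02 : ⁅e 0, e 2⁆ = c₂ • e 3) (h03 : ⁅e 0, e 3⁆ = c₃ • e 4)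
    (h41 : ⁅e 4, e 1⁆ = c₄ • e 5) (h23 : ⁅e 2, e 3⁆ = c₅ • e 5)
    (h0 : ∀ i j : Fin 6, root i + root j ∉ Set.range root → ⁅e i, e j⁆ = 0) :
    IsG2Basis e c₁ c₂ c₃ c₄ c₅ where
  lie_zero_one := h01
  lie_zero_two := h02
  lie_zero_three := h03
  lie_four_one := h41
  lie_two_three := h23
  lie_eq_zero i j hij := h0 i j <| by
    rw [add_mem_range_iff_g2RootCoeff (linearIndependent_pair_of_g2_gram hαα hββ hαβ) hroot]
    rintro ⟨k, hk⟩
    exact hij k hk.symm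

lemma lie_one_zero (he : IsG2Basis e c₁ c₂ c₃ c₄ c₅) : ⁅e 1, e 0⁆ = -(c₁ • e 2) := by
  rw [← lie_skew, he.lie_zero_one]

lemma lie_two_zero (he : IsG2Basis e c₁ c₂ c₃ c₄ c₅) : ⁅e 2, e 0⁆ = -(c₂ • e 3) := by
  rw [← lie_skew, he.lie_zero_two]

lemma lie_three_zero (he : IsG2Basis e c₁ c₂ c₃ c₄ c₅) : ⁅e 3, e 0⁆ = -(c₃ • e 4) := by
  rw [← lie_skew, he.lie_zero_three]

lemma lie_one_four (he : IsG2Basis e c₁ c₂ c₃ c₄ c₅) : ⁅e 1, e 4⁆ = -(c₄ • e 5) := by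
  rw [← lie_skew, he.lie_four_one]

lemma lie_three_two (he : IsG2Basis e c₁ c₂ c₃ c₄ c₅) : ⁅e 3, e 2⁆ = -(c₅ • e 5) := by
  rw [← lie_skew, he.lie_two_three]

lemma lie_basis_zero (he : IsG2Basis e c₁ c₂ c₃ c₄ c₅) (x : n) :
    ⁅e 0, x⁆ = (e.repr x 1 * c₁) • e 2 + (e.repr x 2 * c₂) • e 3 + (e.repr x 3 * c₃) • e 4 := by
  conv_lhs => rw [← e.sum_repr x]
  simp (disch := decide) only [Fin.sum_univ_six, lie_add, lie_smul, lie_self, he.lie_zero_one,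
    he.lie_zero_two, he.lie_zero_three, he.lie_eq_zero]
  module

lemma lie_basis_one (he : IsG2Basis e c₁ c₂ c₃ c₄ c₅) (x : n) :
    ⁅e 1, x⁆ = (-(e.repr x 0 * c₁)) • e 2 + (-(e.repr x 4 * c₄)) • e 5 := by
  conv_lhs => rw [← e.sum_repr x]
  simp (disch := decide) only [Fin.sum_univ_six, lie_add, lie_smul, lie_self, he.lie_one_zero,
    he.lie_one_four, he.lie_eq_zero]
  module

lemma lie_basis_two (he : IsG2Basis e c₁ c₂ c₃ c₄ c₅) (x : n) :
    ⁅e 2, x⁆ = (-(e.repr x 0 * c₂)) • e 3 + (e.repr x 3 * c₅) • e 5 := by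
  conv_lhs => rw [← e.sum_repr x]
  simp (disch := decide) only [Fin.sum_univ_six, lie_add, lie_smul, lie_self, he.lie_two_zero,
    he.lie_two_three, he.lie_eq_zero]
  module

lemma lie_basis_three (he : IsG2Basis e c₁ c₂ c₃ c₄ c₅) (x : n) :
    ⁅e 3, x⁆ = (-(e.repr x 0 * c₃)) • e 4 + (-(e.repr x 2 * c₅)) • e 5 := by
  conv_lhs => rw [← e.sum_repr x]
  simp (disch := decide) only [Fin.sum_univ_six, lie_add, lie_smul, lie_self, he.lie_three_zero,
    he.lie_three_two, he.lie_eq_zero]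
  module

lemma lie_basis_four (he : IsG2Basis e c₁ c₂ c₃ c₄ c₅) (x : n) :
    ⁅e 4, x⁆ = (e.repr x 1 * c₄) • e 5 := by
  conv_lhs => rw [← e.sum_repr x]
  simp (disch := decide) only [Fin.sum_univ_six, lie_add, lie_smul, lie_self, he.lie_four_one,
    he.lie_eq_zero]
  module

lemma lie_basis_five (he : IsG2Basis e c₁ c₂ c₃ c₄ c₅) (x : n) : ⁅e 5, x⁆ = 0 := by
  conv_lhs => rw [← e.sum_repr x]
  simp (disch := decide) only [Fin.sum_univ_six, lie_add, lie_smul, lie_self, he.lie_eq_zero]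
  module

lemma coord_zero_comp_neg_ad (he : IsG2Basis e c₁ c₂ c₃ c₄ c₅) (x : n) :
    e.coord 0 ∘ₗ (-LieAlgebra.ad ℂ n x) = 0 := by
  refine e.ext fun j => ?_
  rw [LinearMap.comp_apply, neg_ad_apply]
  fin_cases j <;> simp [he.lie_basis_zero, he.lie_basis_one, he.lie_basis_two,
    he.lie_basis_three, he.lie_basis_four, he.lie_basis_five]

lemma coord_one_comp_neg_ad (he : IsG2Basis e c₁ c₂ c₃ c₄ c₅) (x : n) :
    e.coord 1 ∘ₗ (-LieAlgebra.ad ℂ n x) = 0 := by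
  refine e.ext fun j => ?_
  rw [LinearMap.comp_apply, neg_ad_apply]
  fin_cases j <;> simp [he.lie_basis_zero, he.lie_basis_one, he.lie_basis_two,
    he.lie_basis_three, he.lie_basis_four, he.lie_basis_five]

lemma coord_two_comp_neg_ad (he : IsG2Basis e c₁ c₂ c₃ c₄ c₅) (x : n) :
    e.coord 2 ∘ₗ (-LieAlgebra.ad ℂ n x) =
      (e.repr x 1 * c₁) • e.coord 0 - (e.repr x 0 * c₁) • e.coord 1 := by
  refine e.ext fun j => ?_
  rw [LinearMap.comp_apply, neg_ad_apply]
  fin_cases j <;> simp [he.lie_basis_zero, he.lie_basis_one, he.lie_basis_two,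
    he.lie_basis_three, he.lie_basis_four, he.lie_basis_five]

lemma coord_three_comp_neg_ad (he : IsG2Basis e c₁ c₂ c₃ c₄ c₅) (x : n) :
    e.coord 3 ∘ₗ (-LieAlgebra.ad ℂ n x) =
      (e.repr x 2 * c₂) • e.coord 0 - (e.repr x 0 * c₂) • e.coord 2 := by
  refine e.ext fun j => ?_
  rw [LinearMap.comp_apply, neg_ad_apply]
  fin_cases j <;> simp [he.lie_basis_zero, he.lie_basis_one, he.lie_basis_two,
    he.lie_basis_three, he.lie_basis_four, he.lie_basis_five]

lemma coord_four_comp_neg_ad (he : IsG2Basis e c₁ c₂ c₃ c₄ c₅) (x : n) :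
    e.coord 4 ∘ₗ (-LieAlgebra.ad ℂ n x) =
      (e.repr x 3 * c₃) • e.coord 0 - (e.repr x 0 * c₃) • e.coord 3 := by
  refine e.ext fun j => ?_
  rw [LinearMap.comp_apply, neg_ad_apply]
  fin_cases j <;> simp [he.lie_basis_zero, he.lie_basis_one, he.lie_basis_two,
    he.lie_basis_three, he.lie_basis_four, he.lie_basis_five]

lemma coord_two_comp_expNil (he : IsG2Basis e c₁ c₂ c₃ c₄ c₅) {x : n}
    (hx : IsNilpotent (LieAlgebra.ad ℂ n x)) :
    e.coord 2 ∘ₗ expNil (-LieAlgebra.ad ℂ n x) =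
      e.coord 2 + (e.repr x 1 * c₁) • e.coord 0 - (e.repr x 0 * c₁) • e.coord 1 := by
  have h₀ := he.coord_zero_comp_neg_ad x
  have h₁ := he.coord_one_comp_neg_ad x
  have h₂ := he.coord_two_comp_neg_ad x
  generalize hA : -LieAlgebra.ad ℂ n x = A at h₀ h₁ h₂
  have hA2 : e.coord 2 ∘ₗ A ^ 2 = 0 := by
    simp [pow_succ, Module.End.mul_eq_comp, ← LinearMap.comp_assoc, LinearMap.sub_comp,
      LinearMap.smul_comp, h₀, h₁, h₂]
  rw [comp_expNil_eq_sum (hA ▸ hx.neg) hA2]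
  simp only [Finset.sum_range_succ, Finset.range_one, Finset.sum_singleton, Nat.factorial_zero,
    Nat.factorial_one, Nat.cast_one, inv_one, pow_zero, pow_one, one_smul, h₂]
  module

lemma coord_four_comp_expNil (he : IsG2Basis e c₁ c₂ c₃ c₄ c₅) {x : n}
    (hx : IsNilpotent (LieAlgebra.ad ℂ n x)) :
    e.coord 4 ∘ₗ expNil (-LieAlgebra.ad ℂ n x) =
      e.coord 4 - (e.repr x 0 * c₃) • e.coord 3 + (e.repr x 0 ^ 2 * c₂ * c₃ / 2) • e.coord 2
        - (e.repr x 0 ^ 3 * c₁ * c₂ * c₃ / 6) • e.coord 1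
        + (e.repr x 3 * c₃ - e.repr x 0 * e.repr x 2 * c₂ * c₃ / 2
          + e.repr x 0 ^ 2 * e.repr x 1 * c₁ * c₂ * c₃ / 6) • e.coord 0 := by
  have h₀ := he.coord_zero_comp_neg_ad x
  have h₁ := he.coord_one_comp_neg_ad x
  have h₂ := he.coord_two_comp_neg_ad x
  have h₃ := he.coord_three_comp_neg_ad x
  have h₄ := he.coord_four_comp_neg_ad x
  generalize hA : -LieAlgebra.ad ℂ n x = A at h₀ h₁ h₂ h₃ h₄
  have hA4 : e.coord 4 ∘ₗ A ^ 4 = 0 := by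
    simp [pow_succ, Module.End.mul_eq_comp, ← LinearMap.comp_assoc, LinearMap.sub_comp,
      LinearMap.smul_comp, h₀, h₁, h₂, h₃, h₄]
  rw [comp_expNil_eq_sum (hA ▸ hx.neg) hA4]
  simp [Finset.sum_range_succ, pow_succ, Module.End.mul_eq_comp, ← LinearMap.comp_assoc,
    LinearMap.sub_comp, LinearMap.smul_comp, h₀, h₂, h₃, h₄, Nat.factorial]
  module

lemma exists_eq_orbit_add_orbit (he : IsG2Basis e c₁ c₂ c₃ c₄ c₅)
    (hnil : ∀ x : n, IsNilpotent (LieAlgebra.ad ℂ n x)) (hc₁ : c₁ ≠ 0) (hc₃ : c₃ ≠ 0)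
    {ξ : Fin 6 → ℂ} (hξ₂ : ξ 2 ≠ 0) (hξ₄ : ξ 4 ≠ 0) {lam : Module.Dual ℂ n}
    (h4 : lam (e 4) = ξ 4) (h5 : lam (e 5) = 0)
    (hrel : 2 * c₃ * lam (e 2) * lam (e 4) - c₂ * lam (e 3) ^ 2 = 2 * c₃ * ξ 2 * ξ 4) :
    ∃ x y : n, lam = ξ 2 • (e.coord 2 ∘ₗ expNil (-LieAlgebra.ad ℂ n x))
      + ξ 4 • (e.coord 4 ∘ₗ expNil (-LieAlgebra.ad ℂ n y)) := by
  set s := -lam (e 3) / (ξ 4 * c₃)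
  set b := lam (e 0) / (ξ 2 * c₁)
  set a := -(lam (e 1) + ξ 4 * (s ^ 3 * c₁ * c₂ * c₃) / 6) / (ξ 2 * c₁)
  refine ⟨a • e 0 + b • e 1, s • e 0, ?_⟩
  rw [he.coord_two_comp_expNil (hnil _), he.coord_four_comp_expNil (hnil _)]
  refine e.ext fun j => ?_
  rw [h4] at hrel
  fin_cases j <;> simp [a, b, s, h4, h5] <;> field_simp
  · ring
  · linear_combination hrel

end IsG2Basis

theorem stmt7_general {n : Type*} [LieRing n] [LieAlgebra ℂ n]
    (α β : EuclideanSpace ℝ (Fin 2))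
    (hαα : ⟪α, α⟫ = 1) (hββ : ⟪β, β⟫ = 3) (hαβ : ⟪α, β⟫ = -(3/2))
    -- the six positive roots of `G₂`: `α, β, α+β, 2α+β, 3α+β, 3α+2β`, indexed by `Fin 6`
    (root : Fin 6 → EuclideanSpace ℝ (Fin 2))
    (hroot : root = ![α, β, α + β, (2:ℝ) • α + β, (3:ℝ) • α + β, (3:ℝ) • α + (2:ℝ) • β])
    (c₁ c₂ c₃ c₄ c₅ : ℂ)
    (hc₁ : c₁ ≠ 0) (hc₃ : c₃ ≠ 0)
    (e : Module.Basis (Fin 6) ℂ n)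
    (h01 : ⁅e 0, e 1⁆ = c₁ • e 2)
    (h02 : ⁅e 0, e 2⁆ = c₂ • e 3)
    (h03 : ⁅e 0, e 3⁆ = c₃ • e 4)
    (h41 : ⁅e 4, e 1⁆ = c₄ • e 5)
    (h23 : ⁅e 2, e 3⁆ = c₅ • e 5)
    (h0 : ∀ i j : Fin 6, root i + root j ∉ Set.range root → ⁅e i, e j⁆ = 0)
    (hnil : ∀ x : n, IsNilpotent (LieAlgebra.ad ℂ n x))
    (ξ : Fin 6 → ℂ) (hξ₂ : ξ 2 ≠ 0) (hξ₄ : ξ 4 ≠ 0)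
    (lam : Module.Dual ℂ n) :
    lam ∈ basicSubvariety e {2, 4} ξ ↔
      (lam (e 4) = ξ 4 ∧ lam (e 5) = 0 ∧
        2 * c₃ * lam (e 2) * lam (e 4) - c₂ * lam (e 3) ^ 2 = 2 * c₃ * ξ 2 * ξ 4) := by
  have he := IsG2Basis.of_roots hαα hββ hαβ hroot h01 h02 h03 h41 h23 h0
  simp only [mem_basicSubvariety_pair_iff (by decide : (2 : Fin 6) ≠ 4),
    mem_coadjointOrbit_singleton_iff]
  constructor
  · rintro ⟨_, ⟨x, rfl⟩, _, ⟨y, rfl⟩, rfl⟩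
    simp [he.coord_two_comp_expNil (hnil x), he.coord_four_comp_expNil (hnil y)]
    ring
  · rintro ⟨h4, h5, hrel⟩
    obtain ⟨x, y, rfl⟩ := he.exists_eq_orbit_add_orbit hnil hc₁ hc₃ hξ₂ hξ₄ h4 h5 hrel
    exact ⟨_, ⟨x, rfl⟩, _, ⟨y, rfl⟩, rfl⟩

theorem stmt7 {n : Type*} [LieRing n] [LieAlgebra ℂ n]
    (α β : EuclideanSpace ℝ (Fin 2))
    (hαα : ⟪α, α⟫ = 1) (hββ : ⟪β, β⟫ = 3) (hαβ : ⟪α, β⟫ = -(3/2))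
    -- the six positive roots of `G₂`: `α, β, α+β, 2α+β, 3α+β, 3α+2β`, indexed by `Fin 6`
    (root : Fin 6 → EuclideanSpace ℝ (Fin 2))
    (hroot : root = ![α, β, α + β, (2:ℝ) • α + β, (3:ℝ) • α + β, (3:ℝ) • α + (2:ℝ) • β])
    (c₁ c₂ c₃ c₄ c₅ : ℂ)
    (hc₁ : c₁ ≠ 0) (hc₂ : c₂ ≠ 0) (hc₃ : c₃ ≠ 0) (hc₄ : c₄ ≠ 0) (hc₅ : c₅ ≠ 0)
    (e : Module.Basis (Fin 6) ℂ n)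
    (h01 : ⁅e 0, e 1⁆ = c₁ • e 2)
    (h02 : ⁅e 0, e 2⁆ = c₂ • e 3)
    (h03 : ⁅e 0, e 3⁆ = c₃ • e 4)
    (h41 : ⁅e 4, e 1⁆ = c₄ • e 5)
    (h23 : ⁅e 2, e 3⁆ = c₅ • e 5)
    (h0 : ∀ i j : Fin 6, root i + root j ∉ Set.range root → ⁅e i, e j⁆ = 0)
    (hnil : ∀ x : n, IsNilpotent (LieAlgebra.ad ℂ n x))
    (ξ : Fin 6 → ℂ) (hξ₂ : ξ 2 ≠ 0) (hξ₄ : ξ 4 ≠ 0)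
    (lam : Module.Dual ℂ n) :
    lam ∈ basicSubvariety e {2, 4} ξ ↔
      (lam (e 4) = ξ 4 ∧ lam (e 5) = 0 ∧
        2 * c₃ * lam (e 2) * lam (e 4) - c₂ * lam (e 3) ^ 2 = 2 * c₃ * ξ 2 * ξ 4) :=
  stmt7_general α β hαα hββ hαβ root hroot c₁ c₂ c₃ c₄ c₅ hc₁ hc₃ e h01 h02 h03 h41 h23 h0 hnil ξ
    hξ₂ hξ₄ lam
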